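/- arXiv:quant-ph/0005055 — 8 statements merged into one kernel-verified Lean document; each statement's English description precedes it below -/
import Mathlib

section
/- If 0 ≤ θ ≤ 2π and 0 ≤ θ' ≤ 2π with |θ' − θ| ≤ ε, then |sin²(θ') − sin²(θ)| ≤ 2ε·√(a(1−a)) + ε², where a = sin²(θ). -/
theorem amp_error_bound (θ θ' ε a : ℝ)
    (hθ : 0 ≤ θ) (hθ2 : θ ≤ 2 * Real.pi)
    (hθ' : 0 ≤ θ') (hθ'2 : θ' ≤ 2 * Real.pi)
    (hε : |θ' - θ| ≤ ε) (ha : a = Real.sin θ ^ 2) :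
    |Real.sin θ' ^ 2 - Real.sin θ ^ 2| ≤ 2 * ε * Real.sqrt (a * (1 - a)) + ε ^ 2 := by
  have hεnn : 0 ≤ ε := le_trans (abs_nonneg _) hε
  have hs : |Real.sin (θ' - θ)| ≤ ε := le_trans (Real.abs_sin_le_abs) hε
  have key : Real.sin θ' ^ 2 - Real.sin θ ^ 2
      = Real.sin (θ' + θ) * Real.sin (θ' - θ) := by
    rw [Real.sin_add, Real.sin_sub]
    have h1 := Real.sin_sq_add_cos_sq θ
    have h2 := Real.sin_sq_add_cos_sq θ'
    nlinarith [h1, h2]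
  have hsqrt : Real.sqrt (a * (1 - a)) = |Real.sin θ * Real.cos θ| := by
    have : a * (1 - a) = (Real.sin θ * Real.cos θ) ^ 2 := by
      have h1 := Real.sin_sq_add_cos_sq θ
      nlinarith [h1]
    rw [this, Real.sqrt_sq_eq_abs]
  have expand : Real.sin (θ' + θ) = Real.sin (2 * θ) * Real.cos (θ' - θ)
      + Real.cos (2 * θ) * Real.sin (θ' - θ) := by
    have : θ' + θ = 2 * θ + (θ' - θ) := by ring
    rw [this, Real.sin_add]
  rw [key, expand, hsqrt]
  have h2θ : Real.sin (2 * θ) = 2 * Real.sin θ * Real.cos θ := Real.sin_two_mul θ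
  calc |(Real.sin (2*θ) * Real.cos (θ'-θ) + Real.cos (2*θ) * Real.sin (θ'-θ)) * Real.sin (θ'-θ)|
      ≤ |Real.sin (2*θ)| * |Real.cos (θ'-θ)| * |Real.sin (θ'-θ)|
        + |Real.cos (2*θ)| * |Real.sin (θ'-θ)| * |Real.sin (θ'-θ)| := by
        rw [add_mul]
        refine le_trans (abs_add_le _ _) ?_
        rw [abs_mul, abs_mul, abs_mul, abs_mul]
    _ ≤ 2 * ε * |Real.sin θ * Real.cos θ| + ε ^ 2 := by
        have hc1 : |Real.cos (θ'-θ)| ≤ 1 := Real.abs_cos_le_one _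
        have hc2 : |Real.cos (2*θ)| ≤ 1 := Real.abs_cos_le_one _
        have h2 : |Real.sin (2*θ)| = 2 * |Real.sin θ * Real.cos θ| := by
          rw [h2θ, abs_mul, abs_mul]
          simp [abs_of_nonneg, mul_assoc, abs_mul]
        rw [h2]
        have hsn := abs_nonneg (Real.sin (θ'-θ))
        nlinarith [hs, abs_nonneg (Real.sin θ * Real.cos θ), abs_nonneg (Real.cos (2*θ)), mul_le_mul hc1 hs hsn (by positivity : (0:ℝ) ≤ 1), mul_le_mul hc2 hs hsn (by positivity : (0:ℝ) ≤ 1), mul_le_mul_of_nonneg_left hs (abs_nonneg (Real.sin θ * Real.cos θ))]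
end

section
/- If θ ∈ (0, π/2) and m = ⌊log₂(1/(5θ))⌋ ≥ 1, then ∏_{ℓ=1}^{m} cos²(2^ℓ θ) ≥ cos²(2/5). -/
open Real Finset

lemma telescope (θ : ℝ) : ∀ m : ℕ,
    (2:ℝ)^m * Real.sin (2*θ) * ∏ ℓ ∈ Finset.Icc 1 m, Real.cos ((2:ℝ)^ℓ * θ)
      = Real.sin ((2:ℝ)^(m+1) * θ) := by
  intro m
  induction m with
  | zero => simp
  | succ n ih =>
      rw [Finset.prod_Icc_succ_top (Nat.le_add_left 1 n)]
      have h2 : ((2:ℝ)^(n+1+1) * θ) = 2 * ((2:ℝ)^(n+1) * θ) := by ring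
      rw [h2, Real.sin_two_mul ((2:ℝ)^(n+1)*θ), ← ih]
      ring

theorem cos_sq_prod_lower_bound (θ : ℝ) (hθ0 : 0 < θ) (hθ1 : θ < Real.pi / 2)
    (m : ℕ) (hm : (m : ℤ) = ⌊Real.logb 2 (1 / (5 * θ))⌋) (hm1 : 1 ≤ m) :
    ∏ ℓ ∈ Finset.Icc 1 m, Real.cos ((2 : ℝ) ^ ℓ * θ) ^ 2 ≥ Real.cos (2 / 5) ^ 2 := by
  have hx : (0:ℝ) < 1 / (5 * θ) := by positivity
  -- 2^m ≤ 1/(5θ)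
  have hfloor : (m : ℝ) ≤ Real.logb 2 (1 / (5 * θ)) := by
    have := Int.floor_le (Real.logb 2 (1 / (5 * θ)))
    rw [← hm] at this
    exact_mod_cast this
  have hpow : (2:ℝ)^m ≤ 1 / (5 * θ) := by
    calc (2:ℝ)^m = (2:ℝ)^(m:ℝ) := by rw [Real.rpow_natCast]
    _ ≤ (2:ℝ)^(Real.logb 2 (1 / (5 * θ))) :=
        Real.rpow_le_rpow_of_exponent_le (by norm_num) hfloor
    _ = 1 / (5 * θ) := Real.rpow_logb (by norm_num) (by norm_num) hx
  set A : ℝ := (2:ℝ)^(m+1) * θ with hA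
  have hA25 : A ≤ 2/5 := by
    have h1 : (2:ℝ)^m * (5*θ) ≤ 1 := by
      calc (2:ℝ)^m * (5*θ) ≤ (1 / (5*θ)) * (5*θ) :=
        mul_le_mul_of_nonneg_right hpow (by positivity)
      _ = 1 := by field_simp
    have : A = 2 * ((2:ℝ)^m * θ) := by rw [hA]; ring
    nlinarith [pow_pos (by norm_num : (0:ℝ) < 2) m]
  have hA0 : 0 < A := by positivity
  have hApi2 : A < Real.pi / 2 := by
    have := Real.pi_gt_three
    linarith
  have hcosA : 0 < Real.cos A := Real.cos_pos_of_mem_Ioo ⟨by linarith, hApi2⟩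
  -- sin A ≥ A cos A
  have htan : A < Real.tan A := Real.lt_tan hA0 hApi2
  have hsinA : A * Real.cos A ≤ Real.sin A := by
    rw [Real.tan_eq_sin_div_cos] at htan
    calc A * Real.cos A ≤ (Real.sin A / Real.cos A) * Real.cos A :=
      mul_le_mul_of_nonneg_right htan.le hcosA.le
    _ = Real.sin A := by field_simp
  -- sin(2θ) bounds
  have h2θ : 2*θ ≤ A := by
    have h2 : (2:ℝ)^1 ≤ (2:ℝ)^(m+1) :=
      pow_le_pow_right₀ (by norm_num) (by omega)
    have := mul_le_mul_of_nonneg_right h2 hθ0.le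
    simpa [hA] using this
  have hsin2θpos : 0 < Real.sin (2*θ) :=
    Real.sin_pos_of_pos_of_lt_pi (by linarith) (by nlinarith [Real.pi_gt_three])
  have hsin2θle : Real.sin (2*θ) ≤ 2*θ := Real.sin_le (by linarith)
  set P : ℝ := ∏ ℓ ∈ Finset.Icc 1 m, Real.cos ((2:ℝ)^ℓ * θ) with hP
  have htel : (2:ℝ)^m * Real.sin (2*θ) * P = Real.sin A := telescope θ m
  have hden : 0 < (2:ℝ)^m * Real.sin (2*θ) := by positivity
  have hkey : Real.cos A ≤ P := by
    have h1 : (2:ℝ)^m * Real.sin (2*θ) * Real.cos A ≤ (2:ℝ)^m * Real.sin (2*θ) * P := by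
      rw [htel]
      calc (2:ℝ)^m * Real.sin (2*θ) * Real.cos A
          ≤ (2:ℝ)^m * (2*θ) * Real.cos A := by
            apply mul_le_mul_of_nonneg_right _ hcosA.le
            exact mul_le_mul_of_nonneg_left hsin2θle (by positivity)
        _ = A * Real.cos A := by rw [hA]; ring
        _ ≤ Real.sin A := hsinA
    exact le_of_mul_le_mul_left h1 hden
  have hcos25 : Real.cos (2/5) ≤ Real.cos A :=
    Real.cos_le_cos_of_nonneg_of_le_pi hA0.le (by nlinarith [Real.pi_gt_three]) hA25
  have hcos25pos : 0 ≤ Real.cos (2/5) :=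
    (Real.cos_pos_of_mem_Ioo ⟨by nlinarith [Real.pi_gt_three], by nlinarith [Real.pi_gt_three]⟩).le
  calc ∏ ℓ ∈ Finset.Icc 1 m, Real.cos ((2 : ℝ) ^ ℓ * θ) ^ 2
      = P ^ 2 := by rw [hP, ← Finset.prod_pow]
    _ ≥ Real.cos (2/5) ^ 2 := by
        apply pow_le_pow_left₀ hcos25pos (le_trans hcos25 hkey)
end

section
/- Let a ∈ (0,1), θ ∈ (0, π/2] with sin²(θ) = a, and m = ⌊π/(4θ)⌋. Then sin²((2m+1)θ) ≥ max(1−a, a). -/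
set_option maxHeartbeats 1000000 in
theorem quadratic_speedup (a θ : ℝ) (ha0 : 0 < a) (ha1 : a < 1)
    (hθ0 : 0 < θ) (hθ1 : θ ≤ Real.pi / 2) (hsin : Real.sin θ ^ 2 = a)
    (m : ℕ) (hm : m = ⌊Real.pi / (4 * θ)⌋₊) :
    Real.sin ((2 * m + 1) * θ) ^ 2 ≥ max (1 - a) a := by
  have hπ := Real.pi_pos
  have h4θ : 0 < 4 * θ := by linarith
  have hsθ0 : 0 ≤ Real.sin θ := Real.sin_nonneg_of_nonneg_of_le_pi hθ0.le (by linarith)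
  have h2 : Real.sqrt 2 ^ 2 = 2 := Real.sq_sqrt (by norm_num)
  by_cases hθ4 : θ ≤ Real.pi / 4
  · -- a ≤ 1/2 case
    have hsθ : Real.sin θ ≤ Real.sqrt 2 / 2 := by
      calc Real.sin θ ≤ Real.sin (Real.pi / 4) :=
            Real.sin_le_sin_of_le_of_le_pi_div_two (by linarith) (by linarith) hθ4
        _ = Real.sqrt 2 / 2 := Real.sin_pi_div_four
    have ha2 : a ≤ 1 / 2 := by rw [← hsin]; nlinarith
    have hmle : (m : ℝ) ≤ Real.pi / (4 * θ) := by
      rw [hm]; exact Nat.floor_le (by positivity)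
    have hmlt : Real.pi / (4 * θ) < (m : ℝ) + 1 := by
      rw [hm]; exact Nat.lt_floor_add_one _
    have hb1 : (m : ℝ) * (4 * θ) ≤ Real.pi := (le_div_iff₀ h4θ).mp hmle
    have hb2 : Real.pi < ((m : ℝ) + 1) * (4 * θ) := (div_lt_iff₀ h4θ).mp hmlt
    set x : ℝ := (2 * (m : ℝ) + 1) * θ with hx
    have hx1 : Real.pi / 2 - θ < x := by rw [hx]; nlinarith
    have hx2 : x ≤ Real.pi / 2 + θ := by rw [hx]; nlinarith
    have habs : |Real.pi / 2 - x| ≤ θ := abs_le.mpr ⟨by linarith, by linarith⟩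
    have hcos : Real.cos θ ≤ Real.cos |Real.pi / 2 - x| :=
      Real.cos_le_cos_of_nonneg_of_le_pi (abs_nonneg _) (by linarith) habs
    have hsinx : Real.cos θ ≤ Real.sin x := by
      rwa [Real.cos_abs, Real.cos_pi_div_two_sub] at hcos
    have hcos0 : 0 ≤ Real.cos θ := Real.cos_nonneg_of_mem_Icc ⟨by linarith, hθ1⟩
    have hsq : Real.cos θ ^ 2 ≤ Real.sin x ^ 2 := by nlinarith
    have hcs : Real.cos θ ^ 2 = 1 - a := by rw [Real.cos_sq']; rw [hsin]
    rw [ge_iff_le, max_le_iff]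
    constructor <;> nlinarith
  · -- θ > π/4, m = 0
    push_neg at hθ4
    have hm0 : m = 0 := by
      rw [hm, Nat.floor_eq_zero]
      rw [div_lt_one h4θ]; linarith
    have hsθ : Real.sqrt 2 / 2 ≤ Real.sin θ := by
      calc Real.sqrt 2 / 2 = Real.sin (Real.pi / 4) := Real.sin_pi_div_four.symm
        _ ≤ Real.sin θ :=
            Real.sin_le_sin_of_le_of_le_pi_div_two (by linarith) hθ1 hθ4.le
    have ha2 : 1 / 2 ≤ a := by rw [← hsin]; nlinarith [Real.sqrt_nonneg 2]
    subst hm0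
    simp only [Nat.cast_zero, mul_zero, zero_add, one_mul]
    rw [hsin, ge_iff_le, max_le_iff]
    constructor <;> linarith
end

section
/- Let Q be the linear operator on a 2-dimensional complex inner product space with orthonormal-like basis vectors Ψ₁, Ψ₀ (with ⟨Ψ₁,Ψ₁⟩ = a, ⟨Ψ₀,Ψ₀⟩ = 1−a, ⟨Ψ₁,Ψ₀⟩ = 0, 0 < a < 1) defined by Q Ψ₁ = (1−2a)Ψ₁ − 2a Ψ₀ and Q Ψ₀ = 2(1−a)Ψ₁ + (1−2a)Ψ₀. Then the vectors Ψ± = (1/√2)(Ψ₁/√a ± (i/√(1−a))Ψ₀) are eigenvectors of Q with eigenvalues e^{±2iθ}, where sin²(θ) = a and 0 < θ < π/2. -/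
/-!
With `s = sin θ` and `c = cos θ`, the Grover iterate acts on the basis `Ψ₁, Ψ₀` with coefficients
`c² - s²`, `-2s²`, `2c²`, `c² - s²`, i.e. as a rotation by `2θ` once `Ψ₁, Ψ₀` are rescaled by
`1/s` and `1/c`. The vectors `Ψ₁/s ± (i/c) Ψ₀` are then eigenvectors for the eigenvalues
`(c ± i s)² = e^{±2iθ}`.
-/

open Complex

theorem LinearMap.apply_grover_eigenvector {V : Type*} [AddCommGroup V] [Module ℂ V]
    (Q : V →ₗ[ℂ] V) {u v : V} {s c ε : ℂ} (hs : s ≠ 0) (hc : c ≠ 0) (hsc : s ^ 2 + c ^ 2 = 1)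
    (hε : ε ^ 2 = -1)
    (hQu : Q u = (1 - 2 * s ^ 2) • u - (2 * s ^ 2) • v)
    (hQv : Q v = (2 * (1 - s ^ 2)) • u + (1 - 2 * s ^ 2) • v) :
    Q ((1 / s) • u + (ε / c) • v) = (c + ε * s) ^ 2 • ((1 / s) • u + (ε / c) • v) := by
  rw [map_add, map_smul, map_smul, hQu, hQv]
  match_scalars
  · field_simp
    linear_combination -(c + 2 * s * ε) * hsc - c * s ^ 2 * hε
  · field_simp
    linear_combination -ε * hsc - (2 * c * s + s ^ 2 * ε) * hε

theorem Complex.exp_two_mul_mul {ε : ℂ} (hε : ε = I ∨ ε = -I) (θ : ℂ) :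
    exp (2 * ε * θ) = (cos θ + ε * sin θ) ^ 2 := by
  have hsq : exp (2 * ε * θ) = exp (θ * ε) ^ 2 := by
    rw [← exp_nat_mul]; ring_nf
  rcases hε with rfl | rfl
  · rw [hsq, exp_mul_I]; ring
  · rw [hsq, show θ * -I = -θ * I by ring, exp_mul_I, cos_neg, sin_neg]; ring

theorem grover_eigenvectors_general {H : Type*} [NormedAddCommGroup H] [InnerProductSpace ℂ H]
    (Q : H →ₗ[ℂ] H) (Ψ₁ Ψ₀ : H) (a θ : ℝ)
    (hθ0 : 0 < θ) (hθ1 : θ < Real.pi / 2) (hsin : Real.sin θ ^ 2 = a)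
    (hQ1 : Q Ψ₁ = ((1 - 2 * a : ℝ) : ℂ) • Ψ₁ - ((2 * a : ℝ) : ℂ) • Ψ₀)
    (hQ0 : Q Ψ₀ = ((2 * (1 - a) : ℝ) : ℂ) • Ψ₁ + ((1 - 2 * a : ℝ) : ℂ) • Ψ₀) :
    Q (((1 / Real.sqrt 2 : ℝ) : ℂ) •
        (((1 / Real.sqrt a : ℝ) : ℂ) • Ψ₁ + (Complex.I / (Real.sqrt (1 - a) : ℂ)) • Ψ₀)) =
      Complex.exp (2 * Complex.I * θ) • (((1 / Real.sqrt 2 : ℝ) : ℂ) •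
        (((1 / Real.sqrt a : ℝ) : ℂ) • Ψ₁ + (Complex.I / (Real.sqrt (1 - a) : ℂ)) • Ψ₀)) ∧
    Q (((1 / Real.sqrt 2 : ℝ) : ℂ) •
        (((1 / Real.sqrt a : ℝ) : ℂ) • Ψ₁ - (Complex.I / (Real.sqrt (1 - a) : ℂ)) • Ψ₀)) =
      Complex.exp (-(2 * Complex.I * θ)) • (((1 / Real.sqrt 2 : ℝ) : ℂ) •
        (((1 / Real.sqrt a : ℝ) : ℂ) • Ψ₁ - (Complex.I / (Real.sqrt (1 - a) : ℂ)) • Ψ₀)) := by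
  subst hsin
  have hs : 0 < Real.sin θ := Real.sin_pos_of_pos_of_lt_pi hθ0 (by linarith [Real.pi_pos])
  have hc : 0 < Real.cos θ := Real.cos_pos_of_mem_Ioo ⟨by linarith, hθ1⟩
  rw [Real.sqrt_sq hs.le, ← Real.cos_sq', Real.sqrt_sq hc.le]
  push_cast at hQ1 hQ0 ⊢
  have hsin_ne : sin (θ : ℂ) ≠ 0 := by exact_mod_cast hs.ne'
  have hcos_ne : cos (θ : ℂ) ≠ 0 := by exact_mod_cast hc.ne'
  have apply_eigenvector (ε : ℂ) (hε : ε = I ∨ ε = -I) (k : ℂ) :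
      Q (k • ((1 / sin (θ : ℂ)) • Ψ₁ + (ε / cos (θ : ℂ)) • Ψ₀)) =
        exp (2 * ε * θ) • k • ((1 / sin (θ : ℂ)) • Ψ₁ + (ε / cos (θ : ℂ)) • Ψ₀) := by
    have hε_sq : ε ^ 2 = -1 := by rcases hε with rfl | rfl <;> simp
    rw [map_smul, Q.apply_grover_eigenvector hsin_ne hcos_ne (sin_sq_add_cos_sq _) hε_sq hQ1 hQ0,
      exp_two_mul_mul hε, smul_comm]
  refine ⟨apply_eigenvector I (.inl rfl) _, ?_⟩
  have minus := apply_eigenvector (-I) (.inr rfl) (1 / (Real.sqrt 2 : ℂ))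
  rwa [neg_div, neg_smul, ← sub_eq_add_neg, mul_neg, neg_mul] at minus

theorem grover_eigenvectors {H : Type*} [NormedAddCommGroup H] [InnerProductSpace ℂ H]
    (Q : H →ₗ[ℂ] H) (Ψ₁ Ψ₀ : H) (a θ : ℝ)
    (ha0 : 0 < a) (ha1 : a < 1)
    (hθ0 : 0 < θ) (hθ1 : θ < Real.pi / 2) (hsin : Real.sin θ ^ 2 = a)
    (hnorm1 : @inner ℂ H _ Ψ₁ Ψ₁ = (a : ℂ))
    (hnorm0 : @inner ℂ H _ Ψ₀ Ψ₀ = ((1 - a : ℝ) : ℂ))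
    (horth : @inner ℂ H _ Ψ₁ Ψ₀ = 0)
    (hQ1 : Q Ψ₁ = ((1 - 2 * a : ℝ) : ℂ) • Ψ₁ - ((2 * a : ℝ) : ℂ) • Ψ₀)
    (hQ0 : Q Ψ₀ = ((2 * (1 - a) : ℝ) : ℂ) • Ψ₁ + ((1 - 2 * a : ℝ) : ℂ) • Ψ₀) :
    Q (((1 / Real.sqrt 2 : ℝ) : ℂ) •
        (((1 / Real.sqrt a : ℝ) : ℂ) • Ψ₁ + (Complex.I / (Real.sqrt (1 - a) : ℂ)) • Ψ₀)) =
      Complex.exp (2 * Complex.I * θ) • (((1 / Real.sqrt 2 : ℝ) : ℂ) •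
        (((1 / Real.sqrt a : ℝ) : ℂ) • Ψ₁ + (Complex.I / (Real.sqrt (1 - a) : ℂ)) • Ψ₀)) ∧
    Q (((1 / Real.sqrt 2 : ℝ) : ℂ) •
        (((1 / Real.sqrt a : ℝ) : ℂ) • Ψ₁ - (Complex.I / (Real.sqrt (1 - a) : ℂ)) • Ψ₀)) =
      Complex.exp (-(2 * Complex.I * θ)) • (((1 / Real.sqrt 2 : ℝ) : ℂ) •
        (((1 / Real.sqrt a : ℝ) : ℂ) • Ψ₁ - (Complex.I / (Real.sqrt (1 - a) : ℂ)) • Ψ₀)) :=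
  grover_eigenvectors_general Q Ψ₁ Ψ₀ a θ hθ0 hθ1 hsin hQ1 hQ0
end

section
/- With Q, Ψ₁, Ψ₀, a, θ as above (QΨ₁ = (1−2a)Ψ₁ − 2aΨ₀, QΨ₀ = 2(1−a)Ψ₁ + (1−2a)Ψ₀, sin²θ = a, 0<a<1), for every nonnegative integer j: Q^j(Ψ₁+Ψ₀) = (sin((2j+1)θ)/√a)·Ψ₁ + (cos((2j+1)θ)/√(1−a))·Ψ₀. -/
/-!
On the vectors `e₁ = Ψ₁ / sin θ`, `e₀ = Ψ₀ / cos θ` the operator `Q` is the rotation by `2θ`,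
and `Ψ₁ + Ψ₀ = sin θ • e₁ + cos θ • e₀` sits at angle `θ`; so `Q ^ j` moves it
to angle `(2j + 1)θ`, and `sin θ = √a`, `cos θ = √(1 - a)`.
-/

open Real

namespace Module.End

variable {R M : Type*} [Semiring R] [AddCommGroup M] [Module R M] [Module ℝ M]
  [LinearMap.CompatibleSMul M M ℝ R] {f : Module.End R M} {e₁ e₀ : M} {α : ℝ}

theorem apply_sin_smul_add_cos_smul (h₁ : f e₁ = cos α • e₁ - sin α • e₀)
    (h₀ : f e₀ = sin α • e₁ + cos α • e₀) (φ : ℝ) :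
    f (sin φ • e₁ + cos φ • e₀) = sin (φ + α) • e₁ + cos (φ + α) • e₀ := by
  rw [map_add, LinearMap.map_smul_of_tower, LinearMap.map_smul_of_tower, h₁, h₀, sin_add, cos_add]
  module

theorem pow_apply_sin_smul_add_cos_smul (h₁ : f e₁ = cos α • e₁ - sin α • e₀)
    (h₀ : f e₀ = sin α • e₁ + cos α • e₀) (j : ℕ) (φ : ℝ) :
    (f ^ j) (sin φ • e₁ + cos φ • e₀) = sin (φ + j * α) • e₁ + cos (φ + j * α) • e₀ := by
  induction j generalizing φ with
  | zero => simp
  | succ j ih =>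
    rw [pow_succ, Module.End.mul_apply, apply_sin_smul_add_cos_smul h₁ h₀, ih]
    push_cast
    ring_nf

end Module.End

theorem grover_iterate_power_general {H : Type*} [NormedAddCommGroup H] [InnerProductSpace ℂ H]
    (Q : H →ₗ[ℂ] H) (Ψ₁ Ψ₀ : H) (a θ : ℝ)
    (hθ0 : 0 < θ) (hθ1 : θ < Real.pi / 2) (hsin : Real.sin θ ^ 2 = a)
    (hQ1 : Q Ψ₁ = ((1 - 2 * a : ℝ) : ℂ) • Ψ₁ - ((2 * a : ℝ) : ℂ) • Ψ₀)
    (hQ0 : Q Ψ₀ = ((2 * (1 - a) : ℝ) : ℂ) • Ψ₁ + ((1 - 2 * a : ℝ) : ℂ) • Ψ₀)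
    (j : ℕ) :
    (Q ^ j) (Ψ₁ + Ψ₀) =
      ((Real.sin ((2 * j + 1) * θ) / Real.sqrt a : ℝ) : ℂ) • Ψ₁ +
        ((Real.cos ((2 * j + 1) * θ) / Real.sqrt (1 - a) : ℝ) : ℂ) • Ψ₀ := by
  have hs : 0 < sin θ := sin_pos_of_pos_of_lt_pi hθ0 (by linarith [pi_pos])
  have hc : 0 < cos θ := cos_pos_of_mem_Ioo ⟨by linarith, hθ1⟩
  have hcos : cos θ ^ 2 = 1 - a := by rw [← hsin, cos_sq']
  have hsqrt₁ : √a = sin θ := by rw [← hsin, sqrt_sq hs.le]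
  have hsqrt₀ : √(1 - a) = cos θ := by rw [← hcos, sqrt_sq hc.le]
  simp only [Complex.coe_smul] at hQ1 hQ0 ⊢
  set e₁ := (sin θ)⁻¹ • Ψ₁
  set e₀ := (cos θ)⁻¹ • Ψ₀
  have hΨ : Ψ₁ + Ψ₀ = sin θ • e₁ + cos θ • e₀ := by
    simp only [e₁, e₀, smul_smul, mul_inv_cancel₀ hs.ne', mul_inv_cancel₀ hc.ne', one_smul]
  have hQe₁ : Q e₁ = cos (2 * θ) • e₁ - sin (2 * θ) • e₀ := by
    rw [LinearMap.map_smul_of_tower, hQ1, cos_two_mul, sin_two_mul]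
    match_scalars
    · field_simp
      linear_combination -2 * hcos
    · field_simp
      linear_combination hsin
  have hQe₀ : Q e₀ = sin (2 * θ) • e₁ + cos (2 * θ) • e₀ := by
    rw [LinearMap.map_smul_of_tower, hQ0, cos_two_mul, sin_two_mul]
    match_scalars
    · field_simp
      linear_combination -hcos
    · field_simp
      linear_combination -2 * hcos
  rw [hΨ, Module.End.pow_apply_sin_smul_add_cos_smul hQe₁ hQe₀, hsqrt₁, hsqrt₀,
    show θ + j * (2 * θ) = (2 * j + 1) * θ by ring]
  simp only [e₁, e₀, smul_smul, div_eq_mul_inv]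

theorem grover_iterate_power {H : Type*} [NormedAddCommGroup H] [InnerProductSpace ℂ H]
    (Q : H →ₗ[ℂ] H) (Ψ₁ Ψ₀ : H) (a θ : ℝ)
    (ha0 : 0 < a) (ha1 : a < 1)
    (hθ0 : 0 < θ) (hθ1 : θ < Real.pi / 2) (hsin : Real.sin θ ^ 2 = a)
    (hnorm1 : @inner ℂ H _ Ψ₁ Ψ₁ = (a : ℂ))
    (hnorm0 : @inner ℂ H _ Ψ₀ Ψ₀ = ((1 - a : ℝ) : ℂ))
    (horth : @inner ℂ H _ Ψ₁ Ψ₀ = 0)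
    (hQ1 : Q Ψ₁ = ((1 - 2 * a : ℝ) : ℂ) • Ψ₁ - ((2 * a : ℝ) : ℂ) • Ψ₀)
    (hQ0 : Q Ψ₀ = ((2 * (1 - a) : ℝ) : ℂ) • Ψ₁ + ((1 - 2 * a : ℝ) : ℂ) • Ψ₀)
    (j : ℕ) :
    (Q ^ j) (Ψ₁ + Ψ₀) =
      ((Real.sin ((2 * j + 1) * θ) / Real.sqrt a : ℝ) : ℂ) • Ψ₁ +
        ((Real.cos ((2 * j + 1) * θ) / Real.sqrt (1 - a) : ℝ) : ℂ) • Ψ₀ :=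
  grover_iterate_power_general Q Ψ₁ Ψ₀ a θ hθ0 hθ1 hsin hQ1 hQ0 j
end

section
/- Let θ ∈ (0, π/2) with m̃ = π/(4θ) − 1/2 not an integer, and let m̄ = ⌈m̃⌉. Define θ̄ = π/(4m̄+2). Then 0 < θ̄ ≤ θ and sin²((2m̄+1)θ̄) = 1. -/
open Real

lemma two_mul_add_one_mul_div_four_mul_add_two (a m : ℝ) (hm : 2 * m + 1 ≠ 0) :
    (2 * m + 1) * (a / (4 * m + 2)) = a / 2 := by
  rw [show 4 * m + 2 = 2 * (2 * m + 1) by ring]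
  field_simp

lemma sin_two_mul_add_one_mul_pi_div_four_mul_add_two_sq (m : ℝ) (hm : 2 * m + 1 ≠ 0) :
    sin ((2 * m + 1) * (π / (4 * m + 2))) ^ 2 = 1 := by
  rw [two_mul_add_one_mul_div_four_mul_add_two π m hm, sin_pi_div_two, one_pow]

lemma div_four_mul_add_two_le_of_div_four_mul_sub_half_le {a θ m : ℝ} (ha : 0 < a) (hθ : 0 < θ)
    (h : a / (4 * θ) - 1 / 2 ≤ m) : 0 < 4 * m + 2 ∧ a / (4 * m + 2) ≤ θ := by
  have h_div : a / θ ≤ 4 * m + 2 := by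
    have : a / θ = 4 * (a / (4 * θ) - 1 / 2) + 2 := by field_simp; ring
    linarith
  have h_pos : 0 < 4 * m + 2 := (div_pos ha hθ).trans_le h_div
  exact ⟨h_pos, (div_le_comm₀ hθ h_pos).mp h_div⟩

theorem derandomization_angle_general (θ : ℝ) (hθ0 : 0 < θ)
    (mt : ℝ) (hmt : mt = Real.pi / (4 * θ) - 1 / 2)
    (mb : ℤ) (hmb : mb = ⌈mt⌉)
    (θb : ℝ) (hθb : θb = Real.pi / (4 * mb + 2)) :
    0 < θb ∧ θb ≤ θ ∧ Real.sin ((2 * mb + 1) * θb) ^ 2 = 1 := by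
  have h_ceil : π / (4 * θ) - 1 / 2 ≤ mb := by rw [hmb, ← hmt]; exact Int.le_ceil mt
  obtain ⟨h_den, h_le⟩ := div_four_mul_add_two_le_of_div_four_mul_sub_half_le pi_pos hθ0 h_ceil
  subst hθb
  refine ⟨div_pos pi_pos h_den, h_le, ?_⟩
  exact sin_two_mul_add_one_mul_pi_div_four_mul_add_two_sq mb (by linarith)

theorem derandomization_angle (θ : ℝ) (hθ0 : 0 < θ) (hθ1 : θ < Real.pi / 2)
    (mt : ℝ) (hmt : mt = Real.pi / (4 * θ) - 1 / 2)
    (hnotint : ¬ ∃ z : ℤ, mt = z)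
    (mb : ℤ) (hmb : mb = ⌈mt⌉)
    (θb : ℝ) (hθb : θb = Real.pi / (4 * mb + 2)) :
    0 < θb ∧ θb ≤ θ ∧ Real.sin ((2 * mb + 1) * θb) ^ 2 = 1 :=
  derandomization_angle_general θ hθ0 mt hmt mb hmb θb hθb
end

section
/- For any real numbers t, t', N with 0 ≤ t ≤ N and 0 ≤ t' ≤ N: √((t'+1)(N−t'+1)) ≤ √((t+1)(N−t+1)) + √(N·|t'−t|). -/
theorem sqrt_count_inequality (N t t' : ℝ) (hN : 0 ≤ N)
    (ht0 : 0 ≤ t) (ht1 : t ≤ N) (ht'0 : 0 ≤ t') (ht'1 : t' ≤ N) :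
    Real.sqrt ((t' + 1) * (N - t' + 1)) ≤
      Real.sqrt ((t + 1) * (N - t + 1)) + Real.sqrt (N * |t' - t|) := by
  have key : (t' + 1) * (N - t' + 1) ≤ (t + 1) * (N - t + 1) + N * |t' - t| := by
    rcases abs_cases (t' - t) with ⟨h, h'⟩ | ⟨h, h'⟩ <;> nlinarith
  calc Real.sqrt ((t' + 1) * (N - t' + 1))
      ≤ Real.sqrt ((t + 1) * (N - t + 1) + N * |t' - t|) := Real.sqrt_le_sqrt key
    _ ≤ Real.sqrt ((t + 1) * (N - t + 1)) + Real.sqrt (N * |t' - t|) :=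
        by
          set a := (t + 1) * (N - t + 1) with ha
          set b := N * |t' - t| with hb
          have ha0 : 0 ≤ a := mul_nonneg (by linarith) (by linarith)
          have hb0 : 0 ≤ b := mul_nonneg hN (abs_nonneg _)
          have h := Real.sqrt_le_sqrt (show a + b ≤ (Real.sqrt a + Real.sqrt b)^2 by
            nlinarith [Real.sq_sqrt ha0, Real.sq_sqrt hb0, Real.sqrt_nonneg a, Real.sqrt_nonneg b])
          rwa [Real.sqrt_sq (by positivity)] at h
end

section
/- For M > 2 an integer and Δ ∈ [0, 1/M], the function g(Δ) = sin²(MΔπ)/(M² sin²(Δπ)) + sin²(M(1/M − Δ)π)/(M² sin²((1/M − Δ)π)) (interpreted by continuity at the endpoints, where it equals 1) satisfies g(Δ) ≥ 8/π², with minimum attained at Δ = 1/(2M). -/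
/-!
Write `F(x) = ∑_{|k|<M} (M - |k|) cos (2kx)`, so that `sin² (M x) = sin² x · F(x)` (Fejér). With
`x = Δπ` this gives `M² g(Δ) = F(x) + F(π/M - x)` on all of `[0, 1/M]`, endpoints included, and
sum-to-product turns it into `4 ∑_{d<M} (M - d) cos (dπ/M) cos (dφ) - 2M` with
`φ = 2x - π/M ∈ [-π/M, π/M]`. The terms `a = d` and `b = M - d` carry opposite factors
`cos (aπ/M) = -cos (bπ/M)`, so together they contribute
`cos (aπ/M) (a (1 - cos bφ) - b (1 - cos aφ))`, which is `≥ 0` because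
`t ↦ b cos (at) - a cos (bt)` increases on `[0, |φ|]`. Hence `g` is smallest at `φ = 0`, i.e. at
`Δ = 1/(2M)`, where `M² g = 2 / sin² (π/(2M)) ≥ 8M²/π²` by `sin y ≤ y`.
-/

open Real Finset

lemma sin_le_sin_of_add_le_pi {a b : ℝ} (ha : 0 ≤ a) (hab : a ≤ b) (hsum : a + b ≤ π) :
    sin a ≤ sin b := by
  have h₁ : 0 ≤ sin ((b - a) / 2) := sin_nonneg_of_nonneg_of_le_pi (by linarith) (by linarith)
  have h₂ : 0 ≤ cos ((b + a) / 2) := cos_nonneg_of_mem_Icc ⟨by linarith [pi_pos], by linarith⟩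
  nlinarith [sin_sub_sin b a, mul_nonneg h₁ h₂]

lemma mul_one_sub_cos_le {a b φ : ℝ} (ha : 0 ≤ a) (hab : a ≤ b) (hφ : 0 ≤ φ)
    (h : (a + b) * φ ≤ π) : b * (1 - cos (a * φ)) ≤ a * (1 - cos (b * φ)) := by
  let F : ℝ → ℝ := fun t => b * cos (a * t) - a * cos (b * t)
  have hF : ∀ t, HasDerivAt F (a * b * (sin (b * t) - sin (a * t))) t := fun t => by
    have hcos (c : ℝ) : HasDerivAt (fun t => cos (c * t)) (-sin (c * t) * (c * 1)) t :=
      ((hasDerivAt_id' t).const_mul c).cos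
    exact (((hcos a).const_mul b).sub ((hcos b).const_mul a)).congr_deriv (by ring)
  have hmono : MonotoneOn F (Set.Icc 0 φ) := by
    refine monotoneOn_of_hasDerivWithinAt_nonneg (convex_Icc 0 φ)
      (fun t _ => (hF t).continuousAt.continuousWithinAt) (fun t _ => (hF t).hasDerivWithinAt)
      fun t ht => ?_
    rw [interior_Icc] at ht
    have hsum : a * t + b * t ≤ π := by nlinarith [ht.1, ht.2]
    have := sin_le_sin_of_add_le_pi (by nlinarith [ht.1]) (by nlinarith [ht.1]) hsum
    exact mul_nonneg (mul_nonneg ha (ha.trans hab)) (by linarith)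
  have := hmono ⟨le_rfl, hφ⟩ ⟨hφ, le_rfl⟩ hφ
  simp only [F, mul_zero, cos_zero, mul_one] at this
  linarith

lemma cos_mul_pi_div_add_mul_sub_nonneg {a b φ : ℝ} (ha : 0 ≤ a) (hb : 0 ≤ b)
    (h : (a + b) * |φ| ≤ π) :
    0 ≤ cos (a * π / (a + b)) * (a * (1 - cos (b * φ)) - b * (1 - cos (a * φ))) := by
  rcases (add_nonneg ha hb).eq_or_lt with h0 | hpos
  · obtain ⟨rfl, rfl⟩ : a = 0 ∧ b = 0 := ⟨by linarith, by linarith⟩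
    simp
  rw [← cos_abs (b * φ), ← cos_abs (a * φ), abs_mul, abs_mul, abs_of_nonneg ha, abs_of_nonneg hb]
  rcases le_total a b with hab | hba
  · have : 0 ≤ a * π / (a + b) := by positivity
    refine mul_nonneg (cos_nonneg_of_mem_Icc ⟨by linarith [pi_pos], ?_⟩)
      (sub_nonneg.2 (mul_one_sub_cos_le ha hab (abs_nonneg φ) h))
    rw [div_le_iff₀ hpos]
    nlinarith [pi_pos]
  · refine mul_nonneg_of_nonpos_of_nonpos (cos_nonpos_of_pi_div_two_le_of_le ?_ ?_)
      (sub_nonpos.2 (mul_one_sub_cos_le hb hba (abs_nonneg φ) (by linarith)))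
    · rw [le_div_iff₀ hpos]
      nlinarith [pi_pos]
    · rw [div_le_iff₀ hpos]
      nlinarith [pi_pos]

/-- `M` times the Fejér kernel of order `M`, evaluated at `2x`. -/
noncomputable def fejerKernel (M : ℕ) (x : ℝ) : ℝ :=
  2 * ∑ d ∈ range M, ((M : ℝ) - d) * cos (2 * d * x) - M

lemma sin_sq_sub_sin_sq (x y : ℝ) : sin x ^ 2 - sin y ^ 2 = sin (x + y) * sin (x - y) := by
  rw [sin_add, sin_sub]
  linear_combination sin y ^ 2 * sin_sq_add_cos_sq x - sin x ^ 2 * sin_sq_add_cos_sq y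

lemma sin_two_mul_add_one_mul (n : ℕ) (x : ℝ) :
    sin ((2 * n + 1) * x) = sin x * (2 * ∑ d ∈ range (n + 1), cos (2 * d * x) - 1) := by
  induction n with
  | zero => norm_num
  | succ n ih =>
    have h := sin_sub_sin ((2 * (n + 1 : ℕ) + 1) * x) ((2 * n + 1) * x)
    rw [sum_range_succ]
    push_cast at h ⊢
    ring_nf at h ih ⊢
    linarith

lemma fejerKernel_succ (n : ℕ) (x : ℝ) :
    fejerKernel (n + 1) x = fejerKernel n x + (2 * ∑ d ∈ range (n + 1), cos (2 * d * x) - 1) := by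
  simp only [fejerKernel, Nat.cast_succ]
  rw [sum_range_succ _ n]
  simp only [add_sub_right_comm _ (1 : ℝ), add_mul, one_mul, sum_add_distrib, sum_range_succ _ n]
  ring

lemma sin_nat_mul_sq (M : ℕ) (x : ℝ) : sin (M * x) ^ 2 = sin x ^ 2 * fejerKernel M x := by
  induction M with
  | zero => simp [fejerKernel]
  | succ n ih =>
    have h := sin_sq_sub_sin_sq ((n + 1 : ℕ) * x) (n * x)
    push_cast at h ⊢
    rw [show ((n : ℝ) + 1) * x + n * x = (2 * n + 1) * x by ring,
      show ((n : ℝ) + 1) * x - n * x = x by ring, sin_two_mul_add_one_mul] at h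
    rw [fejerKernel_succ]
    linear_combination h + ih

lemma fejerKernel_zero_right (M : ℕ) : fejerKernel M 0 = M ^ 2 := by
  induction M with
  | zero => simp [fejerKernel]
  | succ n ih =>
    simp only [fejerKernel_succ, ih, mul_zero, cos_zero, sum_const, card_range, nsmul_eq_mul]
    push_cast
    ring

lemma fejerKernel_pi_div {M : ℕ} (hM : 2 ≤ M) : fejerKernel M (π / M) = 0 := by
  have hM₀ : (0 : ℝ) < M := by positivity
  have hsin : sin (π / M) ≠ 0 := (sin_pos_of_pos_of_lt_pi (by positivity)
    (div_lt_self pi_pos (by exact_mod_cast hM))).ne'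
  have h := sin_nat_mul_sq M (π / M)
  rw [mul_div_cancel₀ _ hM₀.ne', sin_pi] at h
  simpa [hsin] using h.symm

lemma sq_two_mul_div_pi_le_fejerKernel {M : ℕ} (hM : 0 < M) :
    (2 * M / π) ^ 2 ≤ fejerKernel M (π / (2 * M)) := by
  have hx : 0 < π / (2 * M) := by positivity
  have hs₀ : 0 < sin (π / (2 * M)) :=
    sin_pos_of_pos_of_lt_pi hx (div_lt_self pi_pos (by norm_cast; omega))
  have h := sin_nat_mul_sq M (π / (2 * M))
  rw [show (M : ℝ) * (π / (2 * M)) = π / 2 by field_simp, sin_pi_div_two] at h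
  have hF₀ : 0 ≤ fejerKernel M (π / (2 * M)) := by nlinarith [sq_nonneg (sin (π / (2 * M)))]
  have hF : 1 ≤ (π / (2 * M)) ^ 2 * fejerKernel M (π / (2 * M)) := by
    nlinarith [mul_le_mul_of_nonneg_right (pow_le_pow_left₀ hs₀.le (sin_le hx.le) 2) hF₀]
  calc (2 * M / π) ^ 2 = (2 * M / π) ^ 2 * 1 := (mul_one _).symm
    _ ≤ (2 * M / π) ^ 2 * ((π / (2 * M)) ^ 2 * fejerKernel M (π / (2 * M))) := by gcongr
    _ = fejerKernel M (π / (2 * M)) := by field_simp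

lemma fejerKernel_add_fejerKernel_pi_div_sub (M : ℕ) (x : ℝ) :
    fejerKernel M x + fejerKernel M (π / M - x) =
      4 * ∑ d ∈ range M, ((M : ℝ) - d) * cos (d * π / M) * cos (d * (2 * x - π / M)) - 2 * M := by
  have h (d : ℕ) : cos (2 * d * x) + cos (2 * d * (π / M - x)) =
      2 * cos (d * π / M) * cos (d * (2 * x - π / M)) := by
    rw [cos_add_cos]
    ring_nf
  have hsum : ∑ d ∈ range M, ((M : ℝ) - d) * cos (2 * d * x) +
      ∑ d ∈ range M, ((M : ℝ) - d) * cos (2 * d * (π / M - x)) =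
      2 * ∑ d ∈ range M, ((M : ℝ) - d) * cos (d * π / M) * cos (d * (2 * x - π / M)) := by
    rw [← sum_add_distrib, mul_sum]
    exact sum_congr rfl fun d _ => by rw [← mul_add, h]; ring
  simp only [fejerKernel]
  linear_combination 2 * hsum

lemma sum_mul_cos_pi_div_le_sum_mul_cos_mul (M : ℕ) {φ : ℝ} (hφ : |φ| ≤ π / M) :
    ∑ d ∈ range M, ((M : ℝ) - d) * cos (d * π / M) ≤
      ∑ d ∈ range M, ((M : ℝ) - d) * cos (d * π / M) * cos (d * φ) := by
  rcases Nat.eq_zero_or_pos M with rfl | hM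
  · simp
  -- `f M = 0`, so the sum may run over `range (M + 1)`, which `d ↦ M - d` reflects onto itself.
  set f : ℕ → ℝ := fun d => ((M : ℝ) - d) * cos (d * π / M) * (cos (d * φ) - 1)
  have hpair : ∀ d ∈ range (M + 1), 0 ≤ f d + f (M - d) := by
    intro d hd
    have hdM : d ≤ M := Nat.lt_succ_iff.1 (mem_range.1 hd)
    have hM' : (0 : ℝ) < M := by exact_mod_cast hM
    have h := cos_mul_pi_div_add_mul_sub_nonneg (a := d) (b := M - d) (φ := φ)
      (Nat.cast_nonneg d) (by simp [hdM]) (by rwa [add_sub_cancel, ← le_div_iff₀' hM'])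
    have hcos : cos ((M - d : ℕ) * π / M) = -cos (d * π / M) := by
      rw [← cos_pi_sub]
      congr 1
      push_cast [hdM]
      field_simp
    simp only [f, hcos]
    rw [add_sub_cancel] at h
    push_cast [hdM]
    linear_combination h
  have hsum : ∑ d ∈ range M, f d = ∑ d ∈ range (M + 1), f d := by simp [sum_range_succ, f]
  have hreflect : ∑ d ∈ range (M + 1), f (M - d) = ∑ d ∈ range (M + 1), f d := by
    simpa using sum_range_reflect f (M + 1)
  have : 0 ≤ 2 * ∑ d ∈ range M, f d := by
    calc 0 ≤ ∑ d ∈ range (M + 1), (f d + f (M - d)) := sum_nonneg hpair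
      _ = 2 * ∑ d ∈ range M, f d := by rw [sum_add_distrib, hreflect, hsum]; ring
  have hdiff : ∑ d ∈ range M, f d = ∑ d ∈ range M, ((M : ℝ) - d) * cos (d * π / M) * cos (d * φ)
      - ∑ d ∈ range M, ((M : ℝ) - d) * cos (d * π / M) := by
    rw [← sum_sub_distrib]
    exact sum_congr rfl fun d _ => by ring
  linarith

lemma isMinOn_fejerKernel_add_fejerKernel_pi_div_sub (M : ℕ) :
    IsMinOn (fun x => fejerKernel M x + fejerKernel M (π / M - x)) (Set.Icc 0 (π / M))
      (π / (2 * M)) := by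
  intro x hx
  have hφ : |2 * x - π / M| ≤ π / M := abs_le.2 ⟨by linarith [hx.1], by linarith [hx.2]⟩
  dsimp only [Set.mem_ofPred_eq]
  rw [fejerKernel_add_fejerKernel_pi_div_sub, fejerKernel_add_fejerKernel_pi_div_sub,
    (by ring : 2 * (π / (2 * M)) - π / M = 0)]
  simp only [mul_zero, cos_zero, mul_one]
  linarith [sum_mul_cos_pi_div_le_sum_mul_cos_mul M hφ]

lemma sin_nat_mul_sq_div (M : ℕ) {x : ℝ} (hx : sin x ≠ 0) :
    sin (M * x) ^ 2 / (M ^ 2 * sin x ^ 2) = fejerKernel M x / M ^ 2 := by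
  rw [sin_nat_mul_sq, mul_comm ((M : ℝ) ^ 2), mul_div_mul_left _ _ (pow_ne_zero 2 hx)]

noncomputable def successProb (M : ℕ) (Δ : ℝ) : ℝ :=
  if Δ = 0 ∨ Δ = 1 / M then 1
  else sin (M * Δ * π) ^ 2 / ((M : ℝ) ^ 2 * sin (Δ * π) ^ 2) +
    sin (M * (1 / M - Δ) * π) ^ 2 / ((M : ℝ) ^ 2 * sin ((1 / M - Δ) * π) ^ 2)

lemma successProb_eq {M : ℕ} (hM : 2 ≤ M) {Δ : ℝ} (hΔ : Δ ∈ Set.Icc (0 : ℝ) (1 / M)) :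
    successProb M Δ = (fejerKernel M (Δ * π) + fejerKernel M (π / M - Δ * π)) / M ^ 2 := by
  have hM₀ : (0 : ℝ) < M := by positivity
  unfold successProb
  split_ifs with h
  · rcases h with rfl | rfl
    · rw [zero_mul, sub_zero, fejerKernel_zero_right, fejerKernel_pi_div hM, add_zero,
        div_self (by positivity)]
    · rw [one_div_mul_eq_div, sub_self, fejerKernel_zero_right, fejerKernel_pi_div hM, zero_add,
        div_self (by positivity)]
  · push Not at h
    have h₀ : 0 < Δ := lt_of_le_of_ne hΔ.1 (Ne.symm h.1)
    have h₁ : Δ < 1 / M := lt_of_le_of_ne hΔ.2 h.2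
    have hsin {y : ℝ} (hy₀ : 0 < y) (hy₁ : y < 1 / M) : sin (y * π) ≠ 0 := by
      refine (sin_pos_of_pos_of_lt_pi (by positivity) ?_).ne'
      have : 1 / (M : ℝ) ≤ 1 := by rw [div_le_one hM₀]; exact_mod_cast (by omega : 1 ≤ M)
      nlinarith [pi_pos]
    rw [mul_assoc, sin_nat_mul_sq_div M (hsin h₀ h₁), mul_assoc,
      sin_nat_mul_sq_div M (hsin (by linarith) (by linarith)), add_div, sub_mul, one_div_mul_eq_div]

theorem phase_estimation_success (M : ℕ) (hM : 2 < M) :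
    let g : ℝ → ℝ := fun Δ =>
      if Δ = 0 ∨ Δ = 1 / M then 1
      else Real.sin (M * Δ * Real.pi) ^ 2 / ((M : ℝ) ^ 2 * Real.sin (Δ * Real.pi) ^ 2) +
        Real.sin (M * (1 / M - Δ) * Real.pi) ^ 2 /
          ((M : ℝ) ^ 2 * Real.sin ((1 / M - Δ) * Real.pi) ^ 2)
    (∀ Δ ∈ Set.Icc (0 : ℝ) (1 / M), 8 / Real.pi ^ 2 ≤ g Δ) ∧
      ∀ Δ ∈ Set.Icc (0 : ℝ) (1 / M), g (1 / (2 * M)) ≤ g Δ := by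
  intro g
  change (∀ Δ ∈ Set.Icc (0 : ℝ) (1 / M), 8 / π ^ 2 ≤ successProb M Δ) ∧
    ∀ Δ ∈ Set.Icc (0 : ℝ) (1 / M), successProb M (1 / (2 * M)) ≤ successProb M Δ
  have hM₀ : (0 : ℝ) < M := by positivity
  have hmid : 1 / (2 * (M : ℝ)) ∈ Set.Icc (0 : ℝ) (1 / M) :=
    ⟨by positivity, one_div_le_one_div_of_le hM₀ (by linarith)⟩
  have hmin : ∀ Δ ∈ Set.Icc (0 : ℝ) (1 / M), successProb M (1 / (2 * M)) ≤ successProb M Δ := by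
    intro Δ hΔ
    rw [successProb_eq hM.le hmid, successProb_eq hM.le hΔ, one_div_mul_eq_div]
    gcongr ?_ / _
    exact isMinOn_fejerKernel_add_fejerKernel_pi_div_sub M ⟨mul_nonneg hΔ.1 pi_pos.le,
      (mul_le_mul_of_nonneg_right hΔ.2 pi_pos.le).trans_eq (one_div_mul_eq_div _ _)⟩
  have hbound : 8 / π ^ 2 ≤ successProb M (1 / (2 * M)) := by
    rw [successProb_eq hM.le hmid, one_div_mul_eq_div,
      (by ring : π / M - π / (2 * M) = π / (2 * M)), le_div_iff₀ (by positivity)]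
    calc 8 / π ^ 2 * M ^ 2 = 2 * (2 * M / π) ^ 2 := by ring
      _ ≤ _ := by linarith [sq_two_mul_div_pi_le_fejerKernel (M := M) (by omega)]
  exact ⟨fun Δ hΔ => hbound.trans (hmin Δ hΔ), hmin⟩
end
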